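/- Bennett embedding correctness: given a Landauer embedding T_f of f : bit^n → bit^m (a reversible circuit sending (x, 0⃗) to (x, trace, f(x))), the circuit consisting of T_f, followed by m CNOT gates copying (via XOR) the output wires of T_f onto m extra wires initially holding y, followed by the inverse circuit T_f⁻¹ (the reversed gate list), maps (x, 0⃗, y) to (x, 0⃗, y XOR f(x)), restoring all auxiliary wires to false. -/

import Mathlib

set_option autoImplicit true
set_option maxHeartbeats 1000000

/-- A multi-controlled-not gate: an active wire and a list of controls
(wire, polarity). -/
structure Gate where
  active : ℕ
  controls : List (ℕ × Bool)

/-- Well-formedness: no control wire coincides with the active wire. -/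
def Gate.wf (g : Gate) : Prop := ∀ c ∈ g.controls, c.1 ≠ g.active

/-- The set of wires of a gate. -/
def Gate.wires (g : Gate) : Set ℕ := insert g.active {w | ∃ b, (w, b) ∈ g.controls}

/-- Value of a control `(j, b)` on a valuation `v` : `v j XOR b XOR true`. -/
def ctrlVal (v : ℕ → Bool) (c : ℕ × Bool) : Bool := Bool.xor (v c.1) (Bool.xor c.2 true)

/-- Execution of a gate on a valuation. -/
def execGate (g : Gate) (v : ℕ → Bool) : ℕ → Bool := fun l =>
  if l = g.active then
    if g.controls.isEmpty then !(v l)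
    else Bool.xor (v l) (g.controls.all (ctrlVal v))
  else v l

/-- Execution of a list of gates, in order. -/
def execCircuit (C : List Gate) (v : ℕ → Bool) : ℕ → Bool :=
  C.foldl (fun v g => execGate g v) v

/-- Wires of a circuit. -/
def circuitWires (C : List Gate) : Set ℕ := {w | ∃ g ∈ C, w ∈ g.wires}

/-- The copying stage: for each `k`, the gate CNOT(tgt k; (out k, true)),
XOR-ing each output wire onto the corresponding target wire. -/
def copyGates {m : ℕ} (outW tgt : Fin m → ℕ) : List Gate :=
  (List.finRange m).map fun k => ⟨tgt k, [(outW k, true)]⟩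

/-! A gate is an involution, so `T⁻¹` undoes `T`.  The copying gates only write to wires outside
`T`, so they do not disturb the values `T⁻¹` reads, and `T⁻¹` restores every wire of `T` to its
initial value while leaving the copied values on the target wires untouched. -/

theorem execGate_of_ne_active {g : Gate} {w : ℕ} (h : w ≠ g.active) (v : ℕ → Bool) :
    execGate g v w = v w := by
  simp [execGate, h]

theorem execGate_active (g : Gate) (v : ℕ → Bool) :
    execGate g v g.active =
      if g.controls.isEmpty then !(v g.active)
      else Bool.xor (v g.active) (g.controls.all (ctrlVal v)) :=
  if_pos rfl

theorem all_ctrlVal_congr {cs : List (ℕ × Bool)} {v₁ v₂ : ℕ → Bool}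
    (h : ∀ c ∈ cs, v₁ c.1 = v₂ c.1) : cs.all (ctrlVal v₁) = cs.all (ctrlVal v₂) := by
  rw [Bool.eq_iff_iff, List.all_eq_true, List.all_eq_true]
  exact forall₂_congr fun c hc => by rw [ctrlVal, ctrlVal, h c hc]

theorem execGate_eqOn {g : Gate} {S : Set ℕ} {v₁ v₂ : ℕ → Bool} (hg : g.wires ⊆ S)
    (h : Set.EqOn v₁ v₂ S) : Set.EqOn (execGate g v₁) (execGate g v₂) S := by
  intro w hw
  by_cases hwa : w = g.active
  · subst hwa
    rw [execGate_active, execGate_active, h hw,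
      all_ctrlVal_congr fun c hc => h (hg (Set.mem_insert_of_mem _ ⟨c.2, hc⟩))]
  · rw [execGate_of_ne_active hwa, execGate_of_ne_active hwa]
    exact h hw

theorem execGate_execGate {g : Gate} (hg : g.wf) (v : ℕ → Bool) :
    execGate g (execGate g v) = v := by
  funext w
  by_cases hwa : w = g.active
  · subst hwa
    rw [execGate_active, execGate_active,
      all_ctrlVal_congr fun c hc => execGate_of_ne_active (hg c hc) v]
    split <;> simp
  · rw [execGate_of_ne_active hwa, execGate_of_ne_active hwa]

theorem execCircuit_cons (g : Gate) (C : List Gate) (v : ℕ → Bool) :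
    execCircuit (g :: C) v = execCircuit C (execGate g v) := rfl

theorem execCircuit_append (A B : List Gate) (v : ℕ → Bool) :
    execCircuit (A ++ B) v = execCircuit B (execCircuit A v) :=
  List.foldl_append

theorem execCircuit_reverse_execCircuit {C : List Gate} (hC : ∀ g ∈ C, g.wf) (v : ℕ → Bool) :
    execCircuit C.reverse (execCircuit C v) = v := by
  induction C generalizing v with
  | nil => rfl
  | cons g C ih =>
    rw [List.reverse_cons, execCircuit_cons, execCircuit_append,
      ih (fun g' hg' => hC g' (List.mem_cons_of_mem _ hg'))]
    exact execGate_execGate (hC g List.mem_cons_self) v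

theorem execCircuit_of_forall_ne_active {C : List Gate} {w : ℕ} (h : ∀ g ∈ C, w ≠ g.active)
    (v : ℕ → Bool) : execCircuit C v w = v w := by
  induction C generalizing v with
  | nil => rfl
  | cons g C ih =>
    rw [execCircuit_cons, ih (fun g' hg' => h g' (List.mem_cons_of_mem _ hg')),
      execGate_of_ne_active (h g List.mem_cons_self)]

theorem execCircuit_of_notMem_circuitWires {C : List Gate} {w : ℕ} (h : w ∉ circuitWires C)
    (v : ℕ → Bool) : execCircuit C v w = v w :=
  execCircuit_of_forall_ne_active
    (fun g hg hw => h ⟨g, hg, by rw [hw]; exact Set.mem_insert _ _⟩) v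

theorem execCircuit_eqOn {C : List Gate} {S : Set ℕ} {v₁ v₂ : ℕ → Bool}
    (hC : circuitWires C ⊆ S) (h : Set.EqOn v₁ v₂ S) :
    Set.EqOn (execCircuit C v₁) (execCircuit C v₂) S := by
  induction C generalizing v₁ v₂ with
  | nil => exact h
  | cons g C ih =>
    exact ih (fun w ⟨g', hg', hw⟩ => hC ⟨g', List.mem_cons_of_mem _ hg', hw⟩)
      (execGate_eqOn (fun w hw => hC ⟨g, List.mem_cons_self, hw⟩) h)

@[simp]
theorem circuitWires_reverse (C : List Gate) : circuitWires C.reverse = circuitWires C := by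
  simp [circuitWires]

theorem execCircuit_append_append_reverse_of_mem {C D : List Gate} (hC : ∀ g ∈ C, g.wf)
    (hD : ∀ g ∈ D, g.active ∉ circuitWires C) (v : ℕ → Bool) {w : ℕ}
    (hw : w ∈ circuitWires C) : execCircuit (C ++ D ++ C.reverse) v w = v w := by
  have hDC : Set.EqOn (execCircuit D (execCircuit C v)) (execCircuit C v) (circuitWires C) :=
    fun u hu => execCircuit_of_forall_ne_active (fun g hg hua => hD g hg (hua ▸ hu)) _
  rw [execCircuit_append, execCircuit_append,
    execCircuit_eqOn (circuitWires_reverse C).le hDC hw, execCircuit_reverse_execCircuit hC]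

theorem execCircuit_append_append_reverse_of_notMem (C D : List Gate) (v : ℕ → Bool) {w : ℕ}
    (hw : w ∉ circuitWires C) :
    execCircuit (C ++ D ++ C.reverse) v w = execCircuit D (execCircuit C v) w := by
  rw [execCircuit_append, execCircuit_append,
    execCircuit_of_notMem_circuitWires (by rwa [circuitWires_reverse])]

theorem execCircuit_copyGates_of_forall_ne {m : ℕ} (outW : Fin m → ℕ) {tgt : Fin m → ℕ}
    {w : ℕ} (h : ∀ k, w ≠ tgt k) (v : ℕ → Bool) :
    execCircuit (copyGates outW tgt) v w = v w :=
  execCircuit_of_forall_ne_active (by simpa [copyGates] using h) v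

theorem execCircuit_copyGates_tgt {m : ℕ} {outW tgt : Fin m → ℕ} (htgt : Function.Injective tgt)
    (hout : ∀ k j, tgt k ≠ outW j) (v : ℕ → Bool) (k : Fin m) :
    execCircuit (copyGates outW tgt) v (tgt k) = Bool.xor (v (tgt k)) (v (outW k)) := by
  let copyGate : Fin m → Gate := fun k => ⟨tgt k, [(outW k, true)]⟩
  have hskip : ∀ L : List (Fin m), k ∉ L →
      ∀ u, execCircuit (L.map copyGate) u (tgt k) = u (tgt k) :=
    fun L hk => execCircuit_of_forall_ne_active (by
      simpa using fun j hj hkj => hk (by rw [htgt hkj]; exact hj))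
  obtain ⟨L₁, L₂, hsplit⟩ := List.append_of_mem (List.mem_finRange k)
  have hnodup := List.nodup_middle.mp (hsplit ▸ List.nodup_finRange m)
  have hk₁ : k ∉ L₁ := fun h => (List.nodup_cons.mp hnodup).1 (List.mem_append_left _ h)
  have hk₂ : k ∉ L₂ := fun h => (List.nodup_cons.mp hnodup).1 (List.mem_append_right _ h)
  have hL₁ : execCircuit (L₁.map copyGate) v (outW k) = v (outW k) :=
    execCircuit_of_forall_ne_active (by simpa using fun j _ => (hout j k).symm) v
  rw [copyGates, hsplit, List.map_append, List.map_cons, execCircuit_append, execCircuit_cons,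
    hskip L₂ hk₂]
  simp [copyGate, execGate, ctrlVal, hskip L₁ hk₁, hL₁]

/-- Bennett embedding correctness.  Let `T` be a Landauer
embedding of `f` : started on `(x, 0⃗)` it keeps `x` on the input wires and
puts `f x` on the output wires.  Let `tgt` be `m` extra wires, pairwise
distinct and disjoint from all wires of `T`, from its input wires and from
its output wires.  Then the circuit `T ; copy ; T⁻¹` (with `T⁻¹` the reversed
gate list) maps `(x, 0⃗, y)` to `(x, 0⃗, y XOR f x)`: inputs are unchanged,
targets hold `y XOR f x`, and all auxiliary wires of `T` are back to false. -/
theorem bennett_embedding {n m : ℕ} (T : List Gate)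
    (inW : Fin n → ℕ) (outW tgt : Fin m → ℕ)
    (f : (Fin n → Bool) → Fin m → Bool)
    (hT : ∀ (x : Fin n → Bool) (v : ℕ → Bool),
      (∀ i, v (inW i) = x i) →
      (∀ w ∈ circuitWires T, w ∉ Set.range inW → v w = false) →
      (∀ i, execCircuit T v (inW i) = x i) ∧
      (∀ j, execCircuit T v (outW j) = f x j))
    (hwf : ∀ g ∈ T, g.wf)
    (htgt_inj : Function.Injective tgt)
    (htgt_wires : ∀ k, tgt k ∉ circuitWires T)
    (htgt_in : ∀ k, tgt k ∉ Set.range inW)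
    (htgt_out : ∀ k j, tgt k ≠ outW j)
    (x : Fin n → Bool) (y : Fin m → Bool) (v : ℕ → Bool)
    (hvin : ∀ i, v (inW i) = x i)
    (hvtgt : ∀ k, v (tgt k) = y k)
    (hvaux : ∀ w ∈ circuitWires T, w ∉ Set.range inW → v w = false) :
    (∀ i, execCircuit (T ++ copyGates outW tgt ++ T.reverse) v (inW i) = x i) ∧
    (∀ k, execCircuit (T ++ copyGates outW tgt ++ T.reverse) v (tgt k)
            = Bool.xor (y k) (f x k)) ∧
    (∀ w ∈ circuitWires T, w ∉ Set.range inW →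
       execCircuit (T ++ copyGates outW tgt ++ T.reverse) v w = false) := by
  obtain ⟨hin, hout⟩ := hT x v hvin hvaux
  have hcopy : ∀ g ∈ copyGates outW tgt, g.active ∉ circuitWires T := by
    simpa [copyGates] using htgt_wires
  refine ⟨fun i => ?_, fun k => ?_, fun w hw hnin => ?_⟩
  · by_cases hi : inW i ∈ circuitWires T
    · rw [execCircuit_append_append_reverse_of_mem hwf hcopy v hi, hvin]
    · rw [execCircuit_append_append_reverse_of_notMem T _ v hi,
        execCircuit_copyGates_of_forall_ne outW (fun k h => htgt_in k ⟨i, h⟩), hin]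
  · rw [execCircuit_append_append_reverse_of_notMem T _ v (htgt_wires k),
      execCircuit_copyGates_tgt htgt_inj htgt_out, hout,
      execCircuit_of_notMem_circuitWires (htgt_wires k), hvtgt]
  · rw [execCircuit_append_append_reverse_of_mem hwf hcopy v hw, hvaux w hw hnin]
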